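/- arXiv:math/0511220 — 2 statements merged into one kernel-verified Lean document; each statement's English description precedes it below -/
import Mathlib

section
/- If f_{U_m}(q) denotes the polynomial in q giving the sum of degrees of irreducible complex characters of U(m, F_{q²}), and f_{G_m}(q) the corresponding polynomial for GL(m, F_q), then f_{U_m}(q) = (−1)^{m(m+1)/2} f_{G_m}(−q). -/
open Polynomial in
/-- Ennola duality for character degree sums: with
`f_{U_m}(q) = Π_{i=1}^m (q^i + 1 if i odd, q^i if i even)` (the sum of character degrees
of `U(m, F_{q²})`) and `f_{G_m}(q) = Π_{i=1}^m (q^i − 1 if i odd, q^i if i even)` (the sum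
of character degrees of `GL(m, F_q)`), one has
`f_{U_m}(q) = (−1)^{m(m+1)/2} f_{G_m}(−q)` as polynomials in `q`. -/
theorem ennola_duality_degree_sums (m : ℕ) (fU fG : Polynomial ℤ)
    (hU : fU = ∏ i ∈ Finset.Icc 1 m,
      (if Odd i then (X : Polynomial ℤ) ^ i + 1 else (X : Polynomial ℤ) ^ i))
    (hG : fG = ∏ i ∈ Finset.Icc 1 m,
      (if Odd i then (X : Polynomial ℤ) ^ i - 1 else (X : Polynomial ℤ) ^ i)) :
    fU = (-1 : Polynomial ℤ) ^ (m * (m + 1) / 2) * fG.comp (-X) := by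
  subst hU hG
  have h2 : (∑ i ∈ Finset.Icc 1 m, i) * 2 = m * (m + 1) := by
    induction m with
    | zero => simp
    | succ n ih =>
      rw [Finset.sum_Icc_succ_top (by omega), add_mul, ih]
      ring
  have h3 : m * (m + 1) / 2 = ∑ i ∈ Finset.Icc 1 m, i := by omega
  rw [h3, ← Finset.prod_pow_eq_pow_sum, Polynomial.prod_comp, ← Finset.prod_mul_distrib]
  apply Finset.prod_congr rfl
  intro i _
  rcases Nat.even_or_odd i with he | ho
  · simp [Nat.not_odd_iff_even.mpr he, he.neg_pow, he.neg_one_pow]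
  · simp [ho, ho.neg_pow, ho.neg_one_pow]
    ring
end

section
/- Let G be a finite group with index-2 subgroup H, κ ∈ G \ H an involution with ι(h) = κhκ for h ∈ H, and χ an irreducible character of H with ε(χ) = ±1 that extends to G, with Ind_H^G(χ) = χ' + χ'' a sum of two extensions. Then ε(χ') + ε(χ'') = ε(χ) + ε_ι(χ). -/
/-! Since `Ind χ = χ' + χ''`, the sum `ε(χ') + ε(χ'')` is the indicator of the induced function.
As `g ↦ xgx⁻¹` permutes `G`, the average over conjugates disappears, leaving
`(1/|H|) ∑_{g ∈ G} χ̇(g²)` with `χ̇` the extension of `χ` by zero. Splitting `G = H ⊔ Hκ`, the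
squares `h²` give `ε(χ)`, and `(hκ)² = h · κhκ = h · ι(h)` gives `ε_ι(χ)`. -/

open Finset

theorem Fintype.sum_conj_mul_self {G M : Type*} [Group G] [Fintype G] [AddCommMonoid M]
    (f : G → M) (x : G) : ∑ g, f (x * (g * g) * x⁻¹) = ∑ g, f (g * g) :=
  Fintype.sum_equiv (MulAut.conj x).toEquiv _ _ fun g => by simp [mul_assoc]

theorem Subgroup.sum_eq_sum_add_sum_mul_of_index_two {G M : Type*} [Group G] [Fintype G]
    [AddCommMonoid M] {H : Subgroup G} [DecidablePred (· ∈ H)] (hH : H.index = 2) {κ : G}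
    (hκ : κ ∉ H) (f : G → M) : ∑ g, f g = ∑ h : H, f h + ∑ h : H, f (h * κ) := by
  rw [← Fintype.sum_subtype_add_sum_subtype (· ∈ H) f]
  congr 1
  have hmem (g : G) : g ∉ H ↔ Equiv.mulRight κ⁻¹ g ∈ H := by
    simp [mul_mem_iff_of_index_two hH, hκ]
  exact Fintype.sum_equiv ((Equiv.mulRight κ⁻¹).subtypeEquiv hmem) _ _ fun g => by simp

theorem Subgroup.dite_mem_eq_of_eq_coe {G M : Type*} [Group G] [Zero M] {H : Subgroup G}
    [DecidablePred (· ∈ H)] (χ : H → M) {g : G} {y : H} (hg : g = y) :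
    (if h : g ∈ H then χ ⟨g, h⟩ else 0) = χ y := by
  subst hg
  simp

theorem Subgroup.sum_dite_mul_self_of_index_two {G M : Type*} [Group G] [Fintype G]
    [AddCommMonoid M] {H : Subgroup G} [DecidablePred (· ∈ H)] (hH : H.index = 2) {κ : G}
    (hκ : κ ∉ H) (ι : H → H) (hι : ∀ h : H, (ι h : G) = κ * h * κ) (χ : H → M) :
    ∑ g : G, (if hg : g * g ∈ H then χ ⟨g * g, hg⟩ else 0)
      = ∑ h : H, χ (h * h) + ∑ h : H, χ (h * ι h) := by
  rw [sum_eq_sum_add_sum_mul_of_index_two hH hκ]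
  congr 1 <;> refine Fintype.sum_congr _ _ fun h => dite_mem_eq_of_eq_coe χ ?_
  · rfl
  · simp only [Subgroup.coe_mul, hι, mul_assoc]

theorem fs_indicators_of_extensions_general (G : Type) [Group G] [Fintype G]
    (H : Subgroup G) [DecidablePred (fun g : G => g ∈ H)]
    (hH : H.index = 2)
    (κ : G) (hκH : κ ∉ H)
    (ι : H ≃* H) (hι : ∀ h : H, ((ι h : G)) = κ * (h : G) * κ)
    (χ : H → ℂ)
    (χ' χ'' : G → ℂ)
    (hind : ∀ g : G, (1 / (Fintype.card H : ℂ)) *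
        ∑ x : G, (if hx : x * g * x⁻¹ ∈ H then χ ⟨x * g * x⁻¹, hx⟩ else 0)
      = χ' g + χ'' g) :
    (1 / (Fintype.card G : ℂ)) * ∑ g : G, χ' (g * g)
      + (1 / (Fintype.card G : ℂ)) * ∑ g : G, χ'' (g * g)
      = (1 / (Fintype.card H : ℂ)) * ∑ h : H, χ (h * h)
        + (1 / (Fintype.card H : ℂ)) * ∑ h : H, χ (h * ι h) := by
  set φ : G → ℂ := fun g => if hg : g ∈ H then χ ⟨g, hg⟩ else 0
  have hG : (Fintype.card G : ℂ) ≠ 0 := Nat.cast_ne_zero.mpr Fintype.card_ne_zero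
  calc _ = 1 / (Fintype.card G : ℂ) * ∑ g : G, (χ' (g * g) + χ'' (g * g)) := by
        rw [sum_add_distrib, mul_add]
    _ = 1 / (Fintype.card G : ℂ) *
          ∑ g : G, 1 / (Fintype.card H : ℂ) * ∑ x : G, φ (x * (g * g) * x⁻¹) := by
        simp only [hind, φ]
    _ = 1 / (Fintype.card H : ℂ) * ∑ g : G, φ (g * g) := by
        rw [← mul_sum, sum_comm, sum_congr rfl fun x _ => Fintype.sum_conj_mul_self φ x,
          sum_const, card_univ, nsmul_eq_mul]
        field_simp
    _ = _ := by
        rw [← mul_add, ← H.sum_dite_mul_self_of_index_two hH hκH ι hι]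

/-- Let `G` be a finite group, `H` an index-2 subgroup, `κ ∈ G \ H` an involution, and
`ι` the automorphism `h ↦ κhκ` of `H`.  Let `χ` be an irreducible character of `H` with
Frobenius–Schur indicator `ε(χ) = ±1`, which extends to `G`, with
`Ind_H^G(χ) = χ' + χ''` the sum of its two extensions.  Then
`ε(χ') + ε(χ'') = ε(χ) + ε_ι(χ)`, where `ε(ψ) = (1/|G|)Σ_g ψ(g²)` (analogously for `H`)
and `ε_ι(χ) = (1/|H|)Σ_h χ(h·ι(h))`. -/
theorem fs_indicators_of_extensions (G : Type) [Group G] [Fintype G]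
    (H : Subgroup G) [DecidablePred (fun g : G => g ∈ H)]
    (hH : H.index = 2)
    (κ : G) (hκH : κ ∉ H) (hκ2 : κ * κ = 1)
    (ι : H ≃* H) (hι : ∀ h : H, ((ι h : G)) = κ * (h : G) * κ)
    (χ : H → ℂ) (hχ : ∃ V : FDRep ℂ H, CategoryTheory.Simple V ∧ χ = V.character)
    (hε : (1 / (Fintype.card H : ℂ)) * ∑ h : H, χ (h * h) = 1 ∨
          (1 / (Fintype.card H : ℂ)) * ∑ h : H, χ (h * h) = -1)
    (χ' χ'' : G → ℂ)
    (hχ' : ∃ W : FDRep ℂ G, CategoryTheory.Simple W ∧ χ' = W.character)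
    (hχ'' : ∃ W : FDRep ℂ G, CategoryTheory.Simple W ∧ χ'' = W.character)
    (hext' : ∀ h : H, χ' (h : G) = χ h)
    (hext'' : ∀ h : H, χ'' (h : G) = χ h)
    (hind : ∀ g : G, (1 / (Fintype.card H : ℂ)) *
        ∑ x : G, (if hx : x * g * x⁻¹ ∈ H then χ ⟨x * g * x⁻¹, hx⟩ else 0)
      = χ' g + χ'' g) :
    (1 / (Fintype.card G : ℂ)) * ∑ g : G, χ' (g * g)
      + (1 / (Fintype.card G : ℂ)) * ∑ g : G, χ'' (g * g)
      = (1 / (Fintype.card H : ℂ)) * ∑ h : H, χ (h * h)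
        + (1 / (Fintype.card H : ℂ)) * ∑ h : H, χ (h * ι h) :=
  fs_indicators_of_extensions_general G H hH κ hκH ι hι χ χ' χ'' hind
end
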